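/- arXiv:2512.10661 — 4 statements merged into one kernel-verified Lean document; each statement's English description precedes it below -/
import Mathlib

section
/- Let p ≥ 2 and let a₁, a₂ ∈ ℚ with a₁, a₂ > 0. Then the set { -a₁/p^{k₁} - a₂/p^{k₁+k₂} : k₁, k₂ ∈ ℤ, k₁, k₂ ≥ 1 } ⊆ ℚ is well-ordered, and for each γ ∈ ℚ there are at most finitely many pairs (k₁,k₂) ∈ (ℤ≥1)² with γ = -a₁/p^{k₁} - a₂/p^{k₁+k₂}. -/
/-!
The map `(k₁, k₂) ↦ -a₁ / p ^ k₁ - a₂ / p ^ (k₁ + k₂)` is strictly monotone for the product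
order on `ℤ × ℤ`, since `k₁ + k₂` increases strictly whenever `(k₁, k₂)` does. The quadrant
`ℤ≥1 × ℤ≥1` is partially well-ordered, so its monotone image is well-ordered, and each fibre of
the map is an antichain in it, hence finite.
-/

open Set

theorem Set.IsPWO.finite_inter_preimage_singleton {α β : Type*} [PartialOrder α] [Preorder β]
    {s : Set α} (hs : s.IsPWO) {f : α → β} (hf : StrictMonoOn f s) (b : β) :
    (s ∩ f ⁻¹' {b}).Finite := by
  refine IsAntichain.finite_of_partiallyWellOrderedOn ?_ (hs.mono inter_subset_left)
  rintro x ⟨hxs, hx⟩ y ⟨hys, hy⟩ hne hxy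
  exact (hf hxs hys (lt_of_le_of_ne hxy hne)).ne (hx.trans hy.symm)

section

variable {K : Type*} [Field K] [LinearOrder K] [IsStrictOrderedRing K] {b c : K}

theorem antitone_div_zpow (hb : 1 ≤ b) (hc : 0 ≤ c) : Antitone fun k : ℤ => c / b ^ k :=
  fun _ _ hmn =>
    div_le_div_of_nonneg_left hc (zpow_pos (by linarith) _) (zpow_le_zpow_right₀ hb hmn)

theorem strictAnti_div_zpow (hb : 1 < b) (hc : 0 < c) : StrictAnti fun k : ℤ => c / b ^ k :=
  fun _ _ hmn =>
    div_lt_div_of_pos_left hc (zpow_pos (by linarith) _) (zpow_lt_zpow_right₀ hb hmn)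

theorem strictMono_neg_div_zpow_sub_div_zpow_add {a₁ a₂ : K} (hb : 1 < b) (ha₁ : 0 ≤ a₁)
    (ha₂ : 0 < a₂) :
    StrictMono fun k : ℤ × ℤ => -a₁ / b ^ k.1 - a₂ / b ^ (k.1 + k.2) := by
  rintro ⟨k₁, k₂⟩ ⟨l₁, l₂⟩ hkl
  have h₁ : k₁ ≤ l₁ := hkl.le.1
  have h₁₂ : k₁ + k₂ < l₁ + l₂ := by
    rcases Prod.lt_iff.mp hkl with ⟨h, h'⟩ | ⟨h, h'⟩ <;> dsimp only at h h' <;> omega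
  have hterm₁ := antitone_div_zpow hb.le ha₁ h₁
  have hterm₂ := strictAnti_div_zpow hb ha₂ h₁₂
  simp only [neg_div] at hterm₁ hterm₂ ⊢
  linarith

end

theorem isPWO_Ici_prod_Ici (m n : ℤ) : (Ici m ×ˢ Ici n).IsPWO :=
  bddBelow_Ici.isWF.isPWO.prod bddBelow_Ici.isWF.isPWO

/-- For an integer `p ≥ 2` and positive rationals `a₁, a₂`, the set
`{ -a₁/p^{k₁} - a₂/p^{k₁+k₂} : k₁, k₂ ∈ ℤ≥1 }` is well-ordered, and each rational `γ`
has at most finitely many representations of this form. -/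
theorem stmt1 (p : ℤ) (hp : 2 ≤ p) (a₁ a₂ : ℚ) (ha₁ : 0 < a₁) (ha₂ : 0 < a₂) :
    ({x : ℚ | ∃ k₁ k₂ : ℤ, 1 ≤ k₁ ∧ 1 ≤ k₂ ∧
        x = -a₁ / (p : ℚ) ^ k₁ - a₂ / (p : ℚ) ^ (k₁ + k₂)}).IsWF ∧
    ∀ γ : ℚ,
      ({kk : ℤ × ℤ | 1 ≤ kk.1 ∧ 1 ≤ kk.2 ∧
        γ = -a₁ / (p : ℚ) ^ kk.1 - a₂ / (p : ℚ) ^ (kk.1 + kk.2)}).Finite := by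
  set f : ℤ × ℤ → ℚ := fun k => -a₁ / (p : ℚ) ^ k.1 - a₂ / (p : ℚ) ^ (k.1 + k.2)
  have hp₁ : (1 : ℚ) < p := by exact_mod_cast hp
  have hf : StrictMono f := strictMono_neg_div_zpow_sub_div_zpow_add hp₁ ha₁.le ha₂
  have hquad := isPWO_Ici_prod_Ici 1 1
  constructor
  · have himage : {x : ℚ | ∃ k₁ k₂ : ℤ, 1 ≤ k₁ ∧ 1 ≤ k₂ ∧
        x = -a₁ / (p : ℚ) ^ k₁ - a₂ / (p : ℚ) ^ (k₁ + k₂)} = f '' (Ici 1 ×ˢ Ici 1) := by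
      ext x
      simp only [mem_ofPred_eq, mem_image, mem_prod, mem_Ici, Prod.exists, f]
      constructor
      · rintro ⟨k₁, k₂, h₁, h₂, rfl⟩
        exact ⟨k₁, k₂, ⟨h₁, h₂⟩, rfl⟩
      · rintro ⟨k₁, k₂, ⟨h₁, h₂⟩, rfl⟩
        exact ⟨k₁, k₂, h₁, h₂, rfl⟩
    rw [himage]
    exact (hquad.image_of_monotone hf.monotone).isWF
  · intro γ
    convert hquad.finite_inter_preimage_singleton (hf.strictMonoOn _) γ using 1
    ext k
    simp only [mem_ofPred_eq, mem_inter_iff, mem_prod, mem_Ici, mem_preimage,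
      mem_singleton_iff, f]
    rw [eq_comm (b := γ), and_assoc]
end

section
/- Let p ≥ 2 be an integer and let φ : HahnSeries ℚ K → HahnSeries ℚ K be the map sending a Hahn series f(z) to f(z^p) (i.e., the coefficient of f(z^p) at γ equals the coefficient of f at γ/p). If f is a Hahn series whose support is contained in ℚ_{<0}, then the family (φ^{-k}(f))_{k ≥ 1} is summable, i.e., the union of the supports of the φ^{-k}(f) for k ≥ 1 is well-ordered, and each γ ∈ ℚ belongs to the support of only finitely many φ^{-k}(f). -/
/-!
The support of `φ^{-k}(f)` is `{γ | p ^ k * γ ∈ S}` with `S = supp f`. As `S` lies below `0` and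
above some `b`, an element `γ ≤ c < 0` of it forces `p ^ k ≤ b / c`, so below any fixed negative
level only finitely many `k` contribute. Hence each `γ` lies in finitely many of these supports,
and a descending sequence in their union stays below its negative first term, hence inside a
finite union of well-ordered sets.
-/

open Set

theorem Set.IsWF.bddBelow {α : Type*} [LinearOrder α] [Nonempty α] {s : Set α} (hs : s.IsWF) :
    BddBelow s := by
  rcases s.eq_empty_or_nonempty with rfl | hne
  · exact bddBelow_empty
  · exact ⟨hs.min hne, fun _ => hs.min_le hne⟩

theorem Set.IsWF.preimage_of_strictMono {α β : Type*} [Preorder α] [Preorder β] {s : Set β}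
    {f : α → β} (hs : s.IsWF) (hf : StrictMono f) : (f ⁻¹' s).IsWF :=
  (wellFoundedOn_image.1 (hs.mono (image_preimage_subset f s))).mono' fun _ _ _ _ h => hf h

section Dilation

variable {Γ : Type*} [Field Γ] [LinearOrder Γ] [IsStrictOrderedRing Γ] {S : Set Γ} {p : Γ}

theorem neg_of_pow_mul_mem (hneg : S ⊆ Iio 0) (hp : 0 < p) {k : ℕ} {γ : Γ}
    (h : p ^ k * γ ∈ S) : γ < 0 :=
  neg_of_mul_neg_right (hneg h) (pow_pos hp k).le

theorem exists_forall_pow_mul_mem_lt [Archimedean Γ] (hS : BddBelow S) (hp : 1 < p) {c : Γ}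
    (hc : c < 0) : ∃ n : ℕ, ∀ (k : ℕ) (γ : Γ), γ ≤ c → p ^ k * γ ∈ S → k < n := by
  obtain ⟨b, hb⟩ := hS
  obtain ⟨n, hn⟩ := pow_unbounded_of_one_lt (b / c) hp
  refine ⟨n, fun k γ hγc hγ => (pow_lt_pow_iff_right₀ hp).1 (lt_of_le_of_lt ?_ hn)⟩
  calc p ^ k = p ^ k * c / c := (mul_div_cancel_right₀ _ hc.ne).symm
    _ ≤ b / c := div_le_div_of_nonpos_of_le hc.le <|
      (hb hγ).trans (mul_le_mul_of_nonneg_left hγc (pow_pos (zero_lt_one.trans hp) k).le)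

theorem isWF_iUnion_preimage_pow_mul [Archimedean Γ] (hS : S.IsWF) (hneg : S ⊆ Iio 0)
    (hp : 1 < p) : (⋃ k : ℕ, (p ^ k * ·) ⁻¹' S).IsWF := by
  rw [isWF_iff_no_descending_seq]
  intro x hx hmem
  obtain ⟨k₀, hk₀⟩ := mem_iUnion.1 (hmem 0)
  obtain ⟨n, hn⟩ := exists_forall_pow_mul_mem_lt hS.bddBelow hp
    (neg_of_pow_mul_mem hneg (zero_lt_one.trans hp) hk₀)
  have hfin : (⋃ k ∈ Finset.range n, (p ^ k * ·) ⁻¹' S).IsWF :=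
    (Finset.isWF_bUnion _).2 fun k _ =>
      hS.preimage_of_strictMono (strictMono_mul_left_of_pos (pow_pos (zero_lt_one.trans hp) k))
  refine isWF_iff_no_descending_seq.1 hfin x hx fun m => ?_
  obtain ⟨k, hk⟩ := mem_iUnion.1 (hmem m)
  exact mem_biUnion (Finset.mem_range.2 (hn k (x m) (hx.antitone m.zero_le) hk)) hk

theorem finite_setOf_pow_mul_mem [Archimedean Γ] (hS : BddBelow S) (hneg : S ⊆ Iio 0)
    (hp : 1 < p) (γ : Γ) : {k : ℕ | p ^ k * γ ∈ S}.Finite := by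
  rcases lt_or_ge γ 0 with hγ | hγ
  · obtain ⟨n, hn⟩ := exists_forall_pow_mul_mem_lt hS hp hγ
    exact (finite_Iio n).subset fun k hk => hn k γ le_rfl hk
  · exact finite_empty.subset fun k hk =>
      (hγ.not_gt (neg_of_pow_mul_mem hneg (zero_lt_one.trans hp) hk)).elim

end Dilation

/-- Let `p ≥ 2` and let `g k` denote `φ^{-k}(f)`, i.e. the Hahn series with
coefficient at `γ` equal to the coefficient of `f` at `p^k · γ` (so that
`(g k)(z) = f(z^{p^{-k}})`).  If the support of `f` is contained in the negative rationals,
then the family `(g k)_{k ≥ 1}` is summable: the union of the supports is well-ordered and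
each `γ` lies in the support of only finitely many `g k`. -/
theorem stmt2 (K : Type*) [Field K] (p : ℕ) (hp : 2 ≤ p)
    (f : HahnSeries ℚ K) (hf : f.support ⊆ {γ : ℚ | γ < 0})
    (g : ℕ → HahnSeries ℚ K)
    (hg : ∀ (k : ℕ) (γ : ℚ), (g k).coeff γ = f.coeff ((p : ℚ) ^ k * γ)) :
    (⋃ k ∈ {k : ℕ | 1 ≤ k}, (g k).support).IsWF ∧
    ∀ γ : ℚ, ({k : ℕ | 1 ≤ k ∧ γ ∈ (g k).support}).Finite := by
  have hp' : (1 : ℚ) < p := by exact_mod_cast hp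
  have hsupp : ∀ k, (g k).support = ((p : ℚ) ^ k * ·) ⁻¹' f.support := fun k => by
    ext γ
    simp [hg]
  refine ⟨(isWF_iUnion_preimage_pow_mul f.isWF_support hf hp').mono ?_, fun γ => ?_⟩
  · simp only [hsupp]
    exact iUnion₂_subset_iUnion _ _
  · refine (finite_setOf_pow_mul_mem f.isWF_support.bddBelow hf hp' γ).subset fun k hk => ?_
    simpa [hsupp] using hk.2
end

section
/- Let p ≥ 2 be an integer and K a field. Let φ be the automorphism of the field of Hahn series H = HahnSeries ℚ K defined by φ(∑ f_γ z^γ) = ∑ f_γ z^{pγ}. Suppose C, D ∈ GL_d(K) and R ∈ GL_d(H) satisfy φ(R) D = C R. Then R has constant entries: R ∈ GL_d(K), and D = R^{-1} C R. -/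
/-!
Write `R = ∑_γ R_γ z^γ` with `R_γ ∈ M_d(K)`. Comparing coefficients of `z^γ` in
`φ(R) D = C R` gives `R_{γ/p} D = C R_γ`, so, `C` and `D` being invertible, `R_γ ≠ 0` iff
`R_{γ/p} ≠ 0`. The support of `R` is thus a well-ordered set of rationals stable under
multiplication by `p` and by `p⁻¹`; if it contained some `γ ≠ 0`, then `γ p^n` (for `γ < 0`)
or `γ p^{-n}` (for `γ > 0`) would be an infinite descending sequence in it. Hence `R = R_0`.
-/

lemma eq_zero_iff_eq_zero_of_mul_eq_mul {M : Type*} [MonoidWithZero M] {a b c d : M}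
    (hc : IsUnit c) (hd : IsUnit d) (h : a * d = c * b) : a = 0 ↔ b = 0 := by
  rw [← hd.mul_left_eq_zero, h, hc.mul_right_eq_zero]

lemma Set.mul_pow_mem_of_forall_mul_mem {M : Type*} [Monoid M] {s : Set M} {a x : M}
    (hmul : ∀ y ∈ s, y * a ∈ s) (hx : x ∈ s) (n : ℕ) : x * a ^ n ∈ s := by
  induction n with
  | zero => simpa using hx
  | succ n ih => simpa [pow_succ, mul_assoc] using hmul _ ih

lemma Set.IsWF.subset_zero_of_forall_mul_mem_of_forall_div_mem {𝕜 : Type*} [Field 𝕜]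
    [LinearOrder 𝕜] [IsStrictOrderedRing 𝕜] {s : Set 𝕜} {c : 𝕜} (hs : s.IsWF) (hc : 1 < c)
    (hmul : ∀ x ∈ s, x * c ∈ s) (hdiv : ∀ x ∈ s, x / c ∈ s) : s ⊆ {0} := by
  intro x hx
  by_contra hx0
  obtain hneg | hpos := lt_or_gt_of_ne hx0
  · exact isWF_iff_no_descending_seq.mp hs _
      ((pow_right_strictMono₀ hc).const_mul_of_neg hneg)
      (mul_pow_mem_of_forall_mul_mem hmul hx)
  · refine isWF_iff_no_descending_seq.mp hs _
      ((pow_right_strictAnti₀ (inv_pos.2 (zero_lt_one.trans hc))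
        (inv_lt_one_of_one_lt₀ hc)).const_mul hpos)
      (mul_pow_mem_of_forall_mul_mem (fun y hy => ?_) hx)
    simpa [div_eq_mul_inv] using hdiv y hy

lemma HahnSeries.eq_C_coeff_zero {Γ R : Type*} [PartialOrder Γ] [AddCommMonoid Γ]
    [IsOrderedCancelAddMonoid Γ] [Semiring R] {f : HahnSeries Γ R}
    (hf : ∀ γ ≠ 0, f.coeff γ = 0) : f = C (f.coeff 0) := by
  ext γ
  obtain rfl | hγ := eq_or_ne γ 0
  · simp
  · simp [C_apply, coeff_single_of_ne hγ, hf γ hγ]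

lemma Matrix.isUnit_of_isUnit_map {n K S : Type*} [Fintype n] [DecidableEq n] [Field K]
    [CommRing S] [Nontrivial S] (f : K →+* S) {M : Matrix n n K} (h : IsUnit (M.map f)) :
    IsUnit M := by
  rwa [isUnit_iff_isUnit_det, ← RingHom.mapMatrix_apply, ← RingHom.map_det, isUnit_map_iff,
    ← isUnit_iff_isUnit_det] at h

namespace Matrix

variable {l m n Γ R : Type*} [PartialOrder Γ]

def coeffMatrix [Zero R] (M : Matrix m n (HahnSeries Γ R)) (γ : Γ) : Matrix m n R :=
  M.map (HahnSeries.coeff · γ)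

@[simp]
lemma coeffMatrix_apply [Zero R] (M : Matrix m n (HahnSeries Γ R)) (γ : Γ) (i : m) (j : n) :
    M.coeffMatrix γ i j = (M i j).coeff γ := rfl

lemma coeffMatrix_map_of_coeff_eq [Zero R] {Γ' : Type*} [PartialOrder Γ']
    {φ : HahnSeries Γ R → HahnSeries Γ' R} {σ : Γ' → Γ}
    (hφ : ∀ f γ, (φ f).coeff γ = f.coeff (σ γ))
    (M : Matrix m n (HahnSeries Γ R)) (γ : Γ') :
    (M.map φ).coeffMatrix γ = M.coeffMatrix (σ γ) := by
  ext i j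
  simp [hφ]

lemma isWF_setOf_coeffMatrix_ne_zero [Zero R] [Fintype m] [Fintype n]
    (M : Matrix m n (HahnSeries Γ R)) : {γ | M.coeffMatrix γ ≠ 0}.IsWF := by
  refine ((Finset.isWF_sup Finset.univ).2
    fun ij _ => (M (Prod.fst ij) (Prod.snd ij)).isWF_support).subset ?_
  intro γ hγ
  obtain ⟨i, j, hij⟩ : ∃ i j, (M i j).coeff γ ≠ 0 := by
    by_contra! h
    exact hγ (ext h)
  rw [Finset.sup_set_eq_biUnion]
  exact Set.mem_biUnion (Finset.mem_univ (i, j)) hij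

variable [AddCommMonoid Γ] [IsOrderedCancelAddMonoid Γ] [Semiring R]

lemma eq_map_C_coeffMatrix_zero {M : Matrix m n (HahnSeries Γ R)}
    (hM : ∀ γ ≠ 0, M.coeffMatrix γ = 0) : M = (M.coeffMatrix 0).map HahnSeries.C := by
  ext1 i j
  exact HahnSeries.eq_C_coeff_zero fun γ hγ => congrFun₂ (hM γ hγ) i j

variable [Fintype m]

lemma coeffMatrix_mul_map_C (M : Matrix l m (HahnSeries Γ R)) (N : Matrix m n R) (γ : Γ) :
    (M * N.map (HahnSeries.C : R →+* HahnSeries Γ R)).coeffMatrix γ = M.coeffMatrix γ * N := by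
  ext i j
  simp [mul_apply]

lemma coeffMatrix_map_C_mul (M : Matrix m n (HahnSeries Γ R)) (N : Matrix l m R) (γ : Γ) :
    (N.map (HahnSeries.C : R →+* HahnSeries Γ R) * M).coeffMatrix γ = N * M.coeffMatrix γ := by
  ext i j
  simp [mul_apply]

end Matrix

/-- let `p ≥ 2`, `K` a field, and `φ` the automorphism of `HahnSeries ℚ K`
with `φ(∑ f_γ z^γ) = ∑ f_γ z^{pγ}` (so the coefficient of `φ(f)` at `γ` is the
coefficient of `f` at `γ/p`).  If `C, D ∈ GL_d(K)` and `R ∈ GL_d(H)` satisfy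
`φ(R) D = C R`, then `R` has constant entries, i.e. `R = R₀` for some `R₀ ∈ GL_d(K)`,
and `D = R₀⁻¹ C R₀`. -/
theorem stmt14 (p : ℕ) (hp : 2 ≤ p) (K : Type*) [Field K] (d : ℕ)
    (φ : HahnSeries ℚ K → HahnSeries ℚ K)
    (hφ : ∀ (f : HahnSeries ℚ K) (γ : ℚ), (φ f).coeff γ = f.coeff (γ / p))
    (C D : Matrix (Fin d) (Fin d) K) (hC : IsUnit C) (hD : IsUnit D)
    (R : Matrix (Fin d) (Fin d) (HahnSeries ℚ K)) (hR : IsUnit R)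
    (heq : (R.map φ) * (D.map (HahnSeries.C : K →+* HahnSeries ℚ K)) =
      (C.map (HahnSeries.C : K →+* HahnSeries ℚ K)) * R) :
    ∃ R₀ : Matrix (Fin d) (Fin d) K, IsUnit R₀ ∧
      R = R₀.map (HahnSeries.C : K →+* HahnSeries ℚ K) ∧ D = R₀⁻¹ * C * R₀ := by
  have hshift (γ : ℚ) : R.coeffMatrix (γ / p) * D = C * R.coeffMatrix γ := by
    simpa [Matrix.coeffMatrix_mul_map_C, Matrix.coeffMatrix_map_C_mul,
      Matrix.coeffMatrix_map_of_coeff_eq hφ] using congrArg (Matrix.coeffMatrix · γ) heq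
  have hiff (γ : ℚ) : R.coeffMatrix (γ / p) = 0 ↔ R.coeffMatrix γ = 0 :=
    eq_zero_iff_eq_zero_of_mul_eq_mul hC hD (hshift γ)
  have hp0 : (p : ℚ) ≠ 0 := by positivity
  have hsupp : {γ | R.coeffMatrix γ ≠ 0} ⊆ {0} :=
    (Matrix.isWF_setOf_coeffMatrix_ne_zero R).subset_zero_of_forall_mul_mem_of_forall_div_mem
      (c := p) (by exact_mod_cast hp)
      (fun γ hγ h => hγ (by rwa [← hiff, mul_div_cancel_right₀ _ hp0] at h))
      (fun γ hγ => mt (hiff γ).1 hγ)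
  have hconst : R = (R.coeffMatrix 0).map HahnSeries.C :=
    Matrix.eq_map_C_coeffMatrix_zero fun γ hγ => not_not.1 fun h => hγ (hsupp h)
  have hR₀ : IsUnit (R.coeffMatrix 0) :=
    Matrix.isUnit_of_isUnit_map (HahnSeries.C : K →+* HahnSeries ℚ K) (hconst ▸ hR)
  have h0 : R.coeffMatrix 0 * D = C * R.coeffMatrix 0 := by simpa using hshift 0
  refine ⟨R.coeffMatrix 0, hR₀, hconst, ?_⟩
  rw [mul_assoc, ← h0,
    Matrix.nonsing_inv_mul_cancel_left _ _ ((Matrix.isUnit_iff_isUnit_det _).1 hR₀)]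
end

section
/- Let g = ∑_{n≥0} g_n z^n ∈ ℚ[[z]] be a power series solution of g(z) − (1/2)(z−1) g(z²) − (1/2) z g(z⁴) = (1/(2z)) f_RS(z) − (1/(2z)) f_RS(z⁴), where f_RS is the Rudin–Shapiro generating series. Then for all n ≥ 1, g_{2^n} = (1/2) a_{2^n + 1} − (1/2) g_{2^{n−1}}, and consequently the 2-adic valuation of g_{2^n} equals −(n+1) (i.e., g_{2^n} = c/2^{n+1} with c an odd integer), so the logarithmic heights h(g_{2^n}) grow at least linearly in n. -/
/-!
Comparing the coefficients of `z^(2t+1)`, `t ≥ 1`, in the functional equation multiplied by `2z`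
kills every term coming from `g(z²)`, `g(z⁴)` and `f_RS(z⁴)` except `g_t`, leaving
`2 g_{2t} + g_t = a_{2t+1}`. The Rudin–Shapiro values are `±1`, hence `2`-adic units, so the
ultrametric inequality gives `v₂(g_{2^(n+1)}) = v₂(g_{2^n}) - 1`, starting from `g_1 = 5/6`.
Then `2^(n+1)` divides the denominator of `g_{2^n}`, which bounds its height from below.
-/

open PowerSeries

section FunctionalEquation

variable {R : Type*} [CommRing R] (g b c : ℕ → R)

theorem coeff_one_functionalEquation :
    coeff 1 (2 * X * mk g - X * (X - 1) * mk b - X ^ 2 * mk c) = 2 * g 0 + b 0 := by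
  rw [← map_ofNat C 2]
  simp [mul_sub, sub_mul, pow_two, mul_assoc, coeff_succ_X_mul, coeff_C_mul]

theorem coeff_add_two_functionalEquation (m : ℕ) :
    coeff (m + 2) (2 * X * mk g - X * (X - 1) * mk b - X ^ 2 * mk c) =
      2 * g (m + 1) + b (m + 1) - b m - c m := by
  rw [← map_ofNat C 2]
  simp only [mul_assoc, mul_sub, mul_one, sub_mul, pow_two, map_sub, coeff_C_mul,
    coeff_succ_X_mul, coeff_mk, sub_left_inj]
  ring

end FunctionalEquation

theorem padicValRat_sub_of_lt {p : ℕ} [Fact p.Prime] {q r : ℚ} (hq : q ≠ 0)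
    (h : padicValRat p q < padicValRat p r) : padicValRat p (r - q) = padicValRat p q := by
  rcases eq_or_ne r 0 with rfl | hr
  · rw [zero_sub, padicValRat.neg]
  have hrq : -q + r ≠ 0 := fun h0 => by
    rw [neg_add_eq_zero] at h0
    exact h.ne (congrArg _ h0)
  rw [sub_eq_neg_add, padicValRat.add_eq_of_lt hrq (neg_ne_zero.2 hq) hr (by rwa [padicValRat.neg]),
    padicValRat.neg]

theorem Rat.pow_dvd_den_of_padicValRat_le {p k : ℕ} {q : ℚ} (h : padicValRat p q ≤ -k) :
    p ^ k ∣ q.den := by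
  rw [padicValRat_def] at h
  exact (pow_dvd_pow p (by omega)).trans pow_padicValNat_dvd

theorem Rat.mul_log_le_log_max_num_den {p k : ℕ} (hp : 0 < p) {q : ℚ}
    (h : padicValRat p q ≤ -k) : k * Real.log p ≤ Real.log (max |(q.num : ℝ)| q.den) := by
  have hden : (p : ℝ) ^ k ≤ q.den := by
    exact_mod_cast Nat.le_of_dvd q.pos (Rat.pow_dvd_den_of_padicValRat_le h)
  calc k * Real.log p = Real.log ((p : ℝ) ^ k) := (Real.log_pow (p : ℝ) k).symm
    _ ≤ Real.log q.den := Real.log_le_log (by positivity) hden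
    _ ≤ Real.log (max |(q.num : ℝ)| q.den) :=
      Real.log_le_log (by exact_mod_cast q.pos) (le_max_right _ _)

namespace RudinShapiro

variable {a : ℕ → ℤ} (h0 : a 0 = 1) (he : ∀ n, a (2 * n) = a n)
  (ho : ∀ n, a (2 * n + 1) = (-1) ^ n * a n)
include h0 he ho

theorem isUnit (n : ℕ) : IsUnit (a n) := by
  induction n using Nat.evenOddRec with
  | h0 => simp [h0]
  | h_even n ih => rwa [he]
  | h_odd n ih => rw [ho]; exact (isUnit_neg_one.pow n).mul ih

end RudinShapiro

section Solution

variable {a : ℕ → ℤ} {g : ℕ → ℚ}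
  (hg : 2 * X * mk g - X * (X - 1) * mk (fun n => if 2 ∣ n then g (n / 2) else 0)
      - X ^ 2 * mk (fun n => if 4 ∣ n then g (n / 4) else 0)
    = mk (fun n => (a n : ℚ)) - mk (fun n => if 4 ∣ n then (a (n / 4) : ℚ) else 0))
include hg

theorem three_mul_solution_zero : 3 * g 0 = a 1 := by
  have h := congrArg (coeff 1) hg
  rw [coeff_one_functionalEquation] at h
  simp only [map_sub, coeff_mk, dvd_zero, Nat.dvd_one, OfNat.ofNat_ne_one, ↓reduceIte,
    Nat.zero_div, sub_zero] at h
  linarith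

theorem two_mul_solution_one_sub : 2 * g 1 - 2 * g 0 = a 2 := by
  have h := congrArg (coeff 2) hg
  rw [coeff_add_two_functionalEquation] at h
  simp only [map_sub, coeff_mk, zero_add, dvd_zero, Nat.dvd_one, OfNat.ofNat_ne_one, ↓reduceIte,
    Nat.zero_div, Nat.reduceDvd, add_zero, sub_zero] at h
  linarith

theorem two_mul_solution_two_mul_add {t : ℕ} (ht : 0 < t) :
    2 * g (2 * t) + g t = a (2 * t + 1) := by
  obtain ⟨m, rfl⟩ : ∃ m, t = m + 1 := ⟨t - 1, by omega⟩
  have h := congrArg (coeff (2 * m + 3)) hg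
  rw [coeff_add_two_functionalEquation] at h
  simp only [coeff_mk, map_sub, if_neg (show ¬ 2 ∣ 2 * m + 1 by omega),
    if_neg (show ¬ 4 ∣ 2 * m + 1 by omega), if_neg (show ¬ 4 ∣ 2 * m + 3 by omega),
    if_pos (show 2 ∣ 2 * m + 1 + 1 by omega), show (2 * m + 1 + 1) / 2 = m + 1 by omega] at h
  rw [show 2 * (m + 1) = 2 * m + 1 + 1 by ring, show 2 * m + 1 + 1 + 1 = 2 * m + 1 + 2 by ring]
  linarith

theorem solution_two_pow_succ (k : ℕ) :
    g (2 ^ (k + 1)) = (a (2 ^ (k + 1) + 1) - g (2 ^ k)) / 2 := by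
  rw [pow_succ', ← two_mul_solution_two_mul_add hg (Nat.two_pow_pos k)]
  ring

theorem padicValRat_solution_two_pow (h0 : a 0 = 1) (he : ∀ n, a (2 * n) = a n)
    (ho : ∀ n, a (2 * n + 1) = (-1) ^ n * a n) (n : ℕ) :
    padicValRat 2 (g (2 ^ n)) = -(n + 1) := by
  induction n with
  | zero =>
    have ha1 : a 1 = 1 := by simpa [h0] using ho 0
    have ha2 : a 2 = 1 := by simpa [ha1] using he 1
    have hg1 : g 1 = 5 / 6 := by
      have h3 := three_mul_solution_zero hg
      have h2 := two_mul_solution_one_sub hg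
      rw [ha1, Int.cast_one] at h3
      rw [ha2, Int.cast_one] at h2
      linarith
    rw [pow_zero, hg1, padicValRat_def, show (5 / 6 : ℚ).num = 5 by norm_num,
      show (5 / 6 : ℚ).den = 2 * 3 by norm_num, padicValNat.mul two_ne_zero three_ne_zero,
      padicValNat.self one_lt_two, padicValNat.eq_zero_of_not_dvd (by decide),
      padicValInt.eq_zero_of_not_dvd (by decide)]
    rfl
  | succ k ih =>
    set q := g (2 ^ k)
    have hq : q ≠ 0 := fun h => by simp [h] at ih; omega
    have hv : padicValRat 2 (a (2 ^ (k + 1) + 1)) = 0 := by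
      rcases Int.isUnit_iff.1 (RudinShapiro.isUnit h0 he ho (2 ^ (k + 1) + 1)) with h | h <;>
        simp [h]
    have hsub : padicValRat 2 (a (2 ^ (k + 1) + 1) - q) = padicValRat 2 q :=
      padicValRat_sub_of_lt hq (by omega)
    have hne : (a (2 ^ (k + 1) + 1) - q : ℚ) ≠ 0 := fun h => by
      rw [h, padicValRat.zero] at hsub; omega
    have h2 : padicValRat 2 2 = 1 := by simpa using padicValRat.self (p := 2) one_lt_two
    rw [solution_two_pow_succ hg, padicValRat.div hne two_ne_zero, hsub, ih, h2]
    push_cast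
    ring

end Solution

/-- let `g = ∑ g_n z^n ∈ ℚ[[z]]` be a power series solution of
`g(z) − ½(z−1)g(z²) − ½ z g(z⁴) = (1/(2z))(f_RS(z) − f_RS(z⁴))`, stated equivalently
after multiplication by `2z` as a power series identity, where `f_RS = ∑ a_n z^n` is the
Rudin–Shapiro generating series.  Then `g_{2^n} = ½ a_{2^n+1} − ½ g_{2^{n−1}}` for all
`n ≥ 1`, the 2-adic valuation of `g_{2^n}` equals `−(n+1)`, and the logarithmic Weil
heights `h(g_{2^n}) = log max(|num|, den)` grow at least linearly in `n`. -/
theorem stmt17 (a : ℕ → ℤ)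
    (h0 : a 0 = 1)
    (he : ∀ n, a (2 * n) = a n)
    (ho : ∀ n, a (2 * n + 1) = (-1) ^ n * a n)
    (g : ℕ → ℚ)
    (hg : 2 * PowerSeries.X * PowerSeries.mk g
        - PowerSeries.X * (PowerSeries.X - 1) *
            PowerSeries.mk (fun n => if 2 ∣ n then g (n / 2) else 0)
        - PowerSeries.X ^ 2 *
            PowerSeries.mk (fun n => if 4 ∣ n then g (n / 4) else 0)
      = PowerSeries.mk (fun n => (a n : ℚ))
        - PowerSeries.mk (fun n => if 4 ∣ n then (a (n / 4) : ℚ) else 0)) :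
    (∀ n : ℕ, 1 ≤ n →
      g (2 ^ n) = (1 / 2) * (a (2 ^ n + 1) : ℚ) - (1 / 2) * g (2 ^ (n - 1))) ∧
    (∀ n : ℕ, padicValRat 2 (g (2 ^ n)) = -((n : ℤ) + 1)) ∧
    (∃ c : ℝ, 0 < c ∧ ∀ n : ℕ,
      c * n ≤ Real.log (max |((g (2 ^ n)).num : ℝ)| ((g (2 ^ n)).den : ℝ))) := by
  have hval := padicValRat_solution_two_pow hg h0 he ho
  refine ⟨fun n hn => ?_, hval, Real.log 2, Real.log_pos one_lt_two, fun n => ?_⟩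
  · obtain ⟨k, rfl⟩ := Nat.exists_eq_add_of_le' hn
    rw [solution_two_pow_succ hg, Nat.add_sub_cancel]
    ring
  · rw [mul_comm]
    exact_mod_cast Rat.mul_log_le_log_max_num_den two_pos (by rw [hval]; omega)
end
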